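/- Let G be a connected graph on N vertices with positive edge weights J_{ij}, and let H = Σ_{(i,j)∈E(G)} J_{ij} P_{ij} act on (ℂ^N)^{⊗N}. Then the minimum of ⟨ψ, Hψ⟩ over unit vectors ψ equals −Σ J_{ij}, and the N-level singlet state is the unique (up to phase) minimizer. -/

import Mathlib

open scoped InnerProductSpace

/-- The operator on `(ℂ^d)^{⊗N}` permuting the tensor factors according to `σ`. -/
noncomputable def permOp {d N : ℕ} (σ : Equiv.Perm (Fin N)) :
    EuclideanSpace ℂ (Fin N → Fin d) →ₗ[ℂ] EuclideanSpace ℂ (Fin N → Fin d) where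
  toFun ψ := WithLp.toLp 2 (fun f => ψ (f ∘ σ))
  map_add' _ _ := rfl
  map_smul' _ _ := rfl

/-- The `N`-level singlet `(1/√N!) Σ_{σ∈S_N} sgn(σ) e_{σ(1)} ⊗ ⋯ ⊗ e_{σ(N)}`. -/
noncomputable def singlet (N : ℕ) : EuclideanSpace ℂ (Fin N → Fin N) :=
  ((Real.sqrt N.factorial : ℂ))⁻¹ • ∑ σ : Equiv.Perm (Fin N),
    ((Equiv.Perm.sign σ : ℤ) : ℂ) • EuclideanSpace.single (⇑σ) (1 : ℂ)

/-!
Every `P_{ij}` is unitary, so `Re ⟪ψ, P_{ij} ψ⟫ ≥ -‖ψ‖²`, with equality iff `P_{ij} ψ = -ψ`.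
Summing with positive weights gives the lower bound, and the totally antisymmetric singlet
attains it. At a unit minimizer every edge transposition acts as `-1`; the transpositions along
the edges of a connected graph generate `S_N`, so `ψ` is totally antisymmetric. In
`(ℂ^N)^{⊗N}` an antisymmetric tensor vanishes off the basis vectors `e_{σ(1)} ⊗ ⋯ ⊗ e_{σ(N)}`
and is determined by its coefficient at `σ = 1`, so it is a multiple of the singlet.
-/

open Equiv Equiv.Perm Finset

section EqualNorms

variable {𝕜 E : Type*} [RCLike 𝕜] [NormedAddCommGroup E] [InnerProductSpace 𝕜 E] {x y : E}

theorem norm_add_sq_of_norm_eq (h : ‖y‖ = ‖x‖) :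
    ‖x + y‖ ^ 2 = 2 * (‖x‖ ^ 2 + RCLike.re ⟪x, y⟫_𝕜) := by
  rw [@norm_add_sq 𝕜, h]
  ring

theorem neg_sq_norm_le_re_inner_of_norm_eq (h : ‖y‖ = ‖x‖) :
    -‖x‖ ^ 2 ≤ RCLike.re ⟪x, y⟫_𝕜 := by
  have := (norm_add_sq_of_norm_eq (𝕜 := 𝕜) h).symm.trans_ge (sq_nonneg ‖x + y‖)
  linarith

theorem re_inner_eq_neg_sq_norm_iff_of_norm_eq (h : ‖y‖ = ‖x‖) :
    RCLike.re ⟪x, y⟫_𝕜 = -‖x‖ ^ 2 ↔ y = -x := by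
  conv_rhs => rw [eq_neg_iff_add_eq_zero, add_comm, ← norm_eq_zero, ← sq_eq_zero_iff,
    norm_add_sq_of_norm_eq (𝕜 := 𝕜) h]
  constructor <;> intro h' <;> linarith

end EqualNorms

theorem neg_sum_le_sum_mul {ι : Type*} {s : Finset ι} {w a : ι → ℝ} (hw : ∀ i ∈ s, 0 ≤ w i)
    (ha : ∀ i ∈ s, -1 ≤ a i) : -∑ i ∈ s, w i ≤ ∑ i ∈ s, w i * a i := by
  rw [← sum_neg_distrib]
  exact sum_le_sum fun i hi => by nlinarith [hw i hi, ha i hi]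

theorem sum_mul_eq_neg_sum_iff {ι : Type*} {s : Finset ι} {w a : ι → ℝ} (hw : ∀ i ∈ s, 0 < w i)
    (ha : ∀ i ∈ s, -1 ≤ a i) : ∑ i ∈ s, w i * a i = -∑ i ∈ s, w i ↔ ∀ i ∈ s, a i = -1 := by
  have hle : ∀ i ∈ s, w i * -1 ≤ w i * a i := fun i hi => by nlinarith [hw i hi, ha i hi]
  simp_rw [← sum_neg_distrib, ← mul_neg_one (w _), eq_comm (a := ∑ i ∈ s, w i * a i),
    sum_eq_sum_iff_of_le hle]
  refine forall₂_congr fun i hi => ?_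
  rw [mul_right_inj' (hw i hi).ne', eq_comm]

theorem SimpleGraph.Connected.swap_mem {V : Type*} [DecidableEq V] {G : SimpleGraph V}
    (hG : G.Connected) {M : Submonoid (Perm V)} (hM : ∀ i j, G.Adj i j → swap i j ∈ M)
    (a b : V) : swap a b ∈ M := by
  induction (SimpleGraph.reachable_iff_reflTransGen a b).1 (hG a b) with
  | refl => exact swap_self a ▸ M.one_mem
  | tail _ hadj ih => exact SubmonoidClass.swap_mem_trans M ih (hM _ _ hadj)

theorem SimpleGraph.Connected.eq_top_of_swap_mem {V : Type*} [DecidableEq V] [Finite V]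
    {G : SimpleGraph V} (hG : G.Connected) {M : Submonoid (Perm V)}
    (hM : ∀ i j, G.Adj i j → swap i j ∈ M) : M = ⊤ := by
  rw [eq_top_iff, ← mclosure_isSwap, Submonoid.closure_le]
  rintro _ ⟨a, b, -, rfl⟩
  exact hG.swap_mem hM a b

section PermOp

variable {d N : ℕ}

@[simp]
theorem permOp_apply (σ : Perm (Fin N)) (ψ : EuclideanSpace ℂ (Fin N → Fin d))
    (f : Fin N → Fin d) : permOp σ ψ f = ψ (f ∘ σ) := rfl

theorem permOp_one (ψ : EuclideanSpace ℂ (Fin N → Fin d)) : permOp 1 ψ = ψ := rfl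

theorem permOp_mul (σ τ : Perm (Fin N)) (ψ : EuclideanSpace ℂ (Fin N → Fin d)) :
    permOp (σ * τ) ψ = permOp σ (permOp τ ψ) := rfl

theorem inner_permOp_permOp (σ : Perm (Fin N)) (ψ φ : EuclideanSpace ℂ (Fin N → Fin d)) :
    ⟪permOp σ ψ, permOp σ φ⟫_ℂ = ⟪ψ, φ⟫_ℂ := by
  simp only [PiLp.inner_apply, permOp_apply]
  exact (arrowCongr σ.symm (Equiv.refl _)).sum_comp fun f => ⟪ψ f, φ f⟫_ℂ

theorem norm_permOp (σ : Perm (Fin N)) (ψ : EuclideanSpace ℂ (Fin N → Fin d)) :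
    ‖permOp σ ψ‖ = ‖ψ‖ := by
  rw [norm_eq_sqrt_re_inner (𝕜 := ℂ), norm_eq_sqrt_re_inner (𝕜 := ℂ), inner_permOp_permOp]

theorem neg_one_le_re_inner_permOp (σ : Perm (Fin N)) {ψ : EuclideanSpace ℂ (Fin N → Fin d)}
    (hψ : ‖ψ‖ = 1) : -1 ≤ (⟪ψ, permOp σ ψ⟫_ℂ).re := by
  simpa [hψ] using neg_sq_norm_le_re_inner_of_norm_eq (𝕜 := ℂ) (norm_permOp σ ψ)

theorem re_inner_permOp_eq_neg_one_iff (σ : Perm (Fin N))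
    {ψ : EuclideanSpace ℂ (Fin N → Fin d)} (hψ : ‖ψ‖ = 1) :
    (⟪ψ, permOp σ ψ⟫_ℂ).re = -1 ↔ permOp σ ψ = -ψ := by
  simpa [hψ] using re_inner_eq_neg_sq_norm_iff_of_norm_eq (𝕜 := ℂ) (norm_permOp σ ψ)

end PermOp

section Antisymmetric

variable {d N : ℕ}

noncomputable def antisymmetricSubspace (d N : ℕ) :
    Submodule ℂ (EuclideanSpace ℂ (Fin N → Fin d)) :=
  ⨅ σ : Perm (Fin N), LinearMap.ker (permOp σ - ((sign σ : ℤ) : ℂ) • LinearMap.id)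

theorem mem_antisymmetricSubspace {ψ : EuclideanSpace ℂ (Fin N → Fin d)} :
    ψ ∈ antisymmetricSubspace d N ↔ ∀ σ, permOp σ ψ = ((sign σ : ℤ) : ℂ) • ψ := by
  simp [antisymmetricSubspace, sub_eq_zero]

-- A submonoid suffices: transpositions generate `S_N` already as a monoid.
def signStabilizer (ψ : EuclideanSpace ℂ (Fin N → Fin d)) : Submonoid (Perm (Fin N)) where
  carrier := {σ | permOp σ ψ = ((sign σ : ℤ) : ℂ) • ψ}
  one_mem' := by simp [permOp_one]
  mul_mem' {σ τ} hσ hτ := by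
    simp only [Set.mem_ofPred_eq] at hσ hτ ⊢
    rw [permOp_mul, hτ, map_smul, hσ, smul_smul, Perm.sign_mul, Units.val_mul, Int.cast_mul,
      mul_comm]

theorem mem_antisymmetricSubspace_of_connected {G : SimpleGraph (Fin N)} (hG : G.Connected)
    {ψ : EuclideanSpace ℂ (Fin N → Fin d)} (h : ∀ i j, G.Adj i j → permOp (swap i j) ψ = -ψ) :
    ψ ∈ antisymmetricSubspace d N := by
  have htop : signStabilizer ψ = ⊤ := hG.eq_top_of_swap_mem fun i j hij => by
    change permOp _ ψ = _
    simp [h i j hij, sign_swap (G.ne_of_adj hij)]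
  exact mem_antisymmetricSubspace.2 fun σ => (htop ▸ Submonoid.mem_top σ : σ ∈ signStabilizer ψ)

theorem apply_eq_zero_of_not_injective {ψ : EuclideanSpace ℂ (Fin N → Fin d)}
    (hψ : ψ ∈ antisymmetricSubspace d N) {f : Fin N → Fin d} (hf : ¬ f.Injective) : ψ f = 0 := by
  obtain ⟨i, j, hfij, hij⟩ := Function.not_injective_iff.mp hf
  have h := congrArg (· f) (mem_antisymmetricSubspace.1 hψ (swap i j))
  have hfix : f ∘ swap i j = f := funext (apply_swap_eq_self hfij)
  simp only [permOp_apply, hfix, sign_swap hij] at h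
  exact CharZero.eq_neg_self_iff.1 (by simpa using h)

theorem apply_perm_of_mem_antisymmetricSubspace {ψ : EuclideanSpace ℂ (Fin N → Fin N)}
    (hψ : ψ ∈ antisymmetricSubspace N N) (σ : Perm (Fin N)) :
    ψ σ = ((sign σ : ℤ) : ℂ) * ψ id := by
  simpa using congrArg (· id) (mem_antisymmetricSubspace.1 hψ σ)

theorem eq_zero_of_mem_antisymmetricSubspace {ψ : EuclideanSpace ℂ (Fin N → Fin N)}
    (hψ : ψ ∈ antisymmetricSubspace N N) (h : ψ id = 0) : ψ = 0 := by
  ext f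
  by_cases hf : f.Injective
  · have hfσ : f = ofBijective f (Finite.injective_iff_bijective.1 hf) := rfl
    rw [hfσ, apply_perm_of_mem_antisymmetricSubspace hψ, h, mul_zero]
    rfl
  · exact apply_eq_zero_of_not_injective hψ hf

end Antisymmetric

section Singlet

variable {d N : ℕ}

theorem permOp_single (σ : Perm (Fin N)) (g : Fin N → Fin d) :
    permOp σ (EuclideanSpace.single g (1 : ℂ)) = EuclideanSpace.single (g ∘ σ.symm) 1 := by
  ext f
  simp only [permOp_apply, PiLp.single_apply]
  congr 1
  exact propext (eq_comp_symm σ f g).symm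

theorem permOp_singlet (σ : Perm (Fin N)) :
    permOp σ (singlet N) = ((sign σ : ℤ) : ℂ) • singlet N := by
  rw [singlet, map_smul, map_sum, smul_comm ((sign σ : ℤ) : ℂ)]
  congr 1
  rw [smul_sum]
  apply Fintype.sum_equiv (Equiv.mulRight σ⁻¹)
  intro τ
  rw [map_smul, permOp_single, coe_mulRight]
  have hsign : sign σ * sign (τ * σ⁻¹) = sign τ := by
    rw [Perm.sign_mul, sign_inv, mul_left_comm, Int.units_mul_self, mul_one]
  rw [smul_smul, ← Int.cast_mul, ← Units.val_mul, hsign, coe_mul]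
  rfl

theorem singlet_mem_antisymmetricSubspace : singlet N ∈ antisymmetricSubspace N N :=
  mem_antisymmetricSubspace.2 permOp_singlet

theorem singlet_apply_id : singlet N id = (Real.sqrt N.factorial : ℂ)⁻¹ := by
  have hid (σ : Perm (Fin N)) : id = ⇑σ ↔ σ = 1 := by
    rw [← coe_one, DFunLike.coe_fn_eq, eq_comm]
  simp [singlet, WithLp.ofLp_sum, Pi.single_apply, hid]

theorem norm_singlet : ‖singlet N‖ = 1 := by
  have horth : Orthonormal ℂ fun σ : Perm (Fin N) => EuclideanSpace.single (⇑σ) (1 : ℂ) :=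
    EuclideanSpace.orthonormal_single.comp _ DFunLike.coe_injective
  have hsq (u : ℤˣ) : (starRingEnd ℂ) ((u : ℤ) : ℂ) * ((u : ℤ) : ℂ) = 1 := by
    rw [map_intCast, ← Int.cast_mul, ← Units.val_mul, Int.units_mul_self, Units.val_one,
      Int.cast_one]
  rw [norm_eq_sqrt_re_inner (𝕜 := ℂ), singlet, inner_smul_left, inner_smul_right, horth.inner_sum]
  simp only [hsq, sum_const, card_univ, Fintype.card_perm, Fintype.card_fin, nsmul_eq_mul, mul_one,
    Complex.conj_inv, Complex.conj_ofReal]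
  have hfact : (0 : ℝ) < N.factorial := by positivity
  rw [← Complex.ofReal_natCast, ← Complex.ofReal_inv, ← Complex.ofReal_mul, ← Complex.ofReal_mul,
    RCLike.re_to_complex, Complex.ofReal_re, ← mul_assoc, ← mul_inv, Real.mul_self_sqrt hfact.le,
    inv_mul_cancel₀ hfact.ne', Real.sqrt_one]

theorem eq_smul_singlet_of_mem_antisymmetricSubspace {ψ : EuclideanSpace ℂ (Fin N → Fin N)}
    (hψ : ψ ∈ antisymmetricSubspace N N) :
    ψ = ((Real.sqrt N.factorial : ℂ) * ψ id) • singlet N := by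
  have hfact : (Real.sqrt N.factorial : ℂ) ≠ 0 := by
    exact_mod_cast (Real.sqrt_pos.2 (by positivity : (0 : ℝ) < N.factorial)).ne'
  rw [← sub_eq_zero]
  refine eq_zero_of_mem_antisymmetricSubspace
    (sub_mem hψ (Submodule.smul_mem _ _ singlet_mem_antisymmetricSubspace)) ?_
  simp [singlet_apply_id, mul_comm _ (ψ id), hfact]

theorem exists_eq_smul_singlet_of_mem_antisymmetricSubspace
    {ψ : EuclideanSpace ℂ (Fin N → Fin N)} (hψ : ψ ∈ antisymmetricSubspace N N) (h1 : ‖ψ‖ = 1) :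
    ∃ c : ℂ, ‖c‖ = 1 ∧ ψ = c • singlet N := by
  refine ⟨_, ?_, eq_smul_singlet_of_mem_antisymmetricSubspace hψ⟩
  rwa [eq_smul_singlet_of_mem_antisymmetricSubspace hψ, norm_smul, norm_singlet, mul_one] at h1

end Singlet

theorem re_inner_sum_ofReal_smul_apply {E ι : Type*} [NormedAddCommGroup E]
    [InnerProductSpace ℂ E] (s : Finset ι) (w : ι → ℝ) (T : ι → E →ₗ[ℂ] E) (ψ : E) :
    (⟪ψ, (∑ i ∈ s, (w i : ℂ) • T i) ψ⟫_ℂ).re = ∑ i ∈ s, w i * (⟪ψ, T i ψ⟫_ℂ).re := by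
  simp [LinearMap.sum_apply, Complex.re_sum]

/-- Each edge is counted once in each orientation, in both `H` and the bound. -/
theorem singlet_unique_ground_state_general
    {N : ℕ} (G : SimpleGraph (Fin N)) [DecidableRel G.Adj] (hG : G.Connected)
    (J : Fin N → Fin N → ℝ) (hJpos : ∀ i j, G.Adj i j → 0 < J i j)
    (H : EuclideanSpace ℂ (Fin N → Fin N) →ₗ[ℂ] EuclideanSpace ℂ (Fin N → Fin N))
    (hH : H = ∑ p ∈ Finset.univ.filter (fun p : Fin N × Fin N => G.Adj p.1 p.2),
      (J p.1 p.2 : ℂ) • permOp (Equiv.swap p.1 p.2)) :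
    (∀ ψ : EuclideanSpace ℂ (Fin N → Fin N), ‖ψ‖ = 1 →
      -(∑ p ∈ Finset.univ.filter (fun p : Fin N × Fin N => G.Adj p.1 p.2), J p.1 p.2)
        ≤ (⟪ψ, H ψ⟫_ℂ).re) ∧
    (⟪singlet N, H (singlet N)⟫_ℂ).re =
      -(∑ p ∈ Finset.univ.filter (fun p : Fin N × Fin N => G.Adj p.1 p.2), J p.1 p.2) ∧
    (∀ ψ : EuclideanSpace ℂ (Fin N → Fin N), ‖ψ‖ = 1 →
      (⟪ψ, H ψ⟫_ℂ).re =
        -(∑ p ∈ Finset.univ.filter (fun p : Fin N × Fin N => G.Adj p.1 p.2), J p.1 p.2) →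
      ∃ c : ℂ, ‖c‖ = 1 ∧ ψ = c • singlet N) := by
  subst hH
  set E := univ.filter fun p : Fin N × Fin N => G.Adj p.1 p.2
  have hJ : ∀ p ∈ E, 0 < J p.1 p.2 := fun p hp => hJpos _ _ (mem_filter.1 hp).2
  have hlow : ∀ ψ : EuclideanSpace ℂ (Fin N → Fin N), ‖ψ‖ = 1 →
      ∀ p ∈ E, -1 ≤ (⟪ψ, permOp (swap p.1 p.2) ψ⟫_ℂ).re :=
    fun ψ hψ p _ => neg_one_le_re_inner_permOp _ hψ
  simp only [re_inner_sum_ofReal_smul_apply]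
  refine ⟨fun ψ hψ => neg_sum_le_sum_mul (fun p hp => (hJ p hp).le) (hlow ψ hψ), ?_,
    fun ψ hψ hmin => ?_⟩
  · refine (sum_mul_eq_neg_sum_iff hJ (hlow _ norm_singlet)).2 fun p hp => ?_
    rw [re_inner_permOp_eq_neg_one_iff _ norm_singlet, permOp_singlet,
      sign_swap (G.ne_of_adj (mem_filter.1 hp).2)]
    simp
  · have hswap := (sum_mul_eq_neg_sum_iff hJ (hlow ψ hψ)).1 hmin
    refine exists_eq_smul_singlet_of_mem_antisymmetricSubspace
      (mem_antisymmetricSubspace_of_connected hG fun i j hij => ?_) hψ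
    exact (re_inner_permOp_eq_neg_one_iff _ hψ).1 (hswap (i, j) (by simpa [E] using hij))

/-- For a connected graph `G` on `N` vertices with positive symmetric
edge weights `J`, and `H = Σ_{edges} J_{ij} P_{ij}` on `(ℂ^N)^{⊗N}` (here each
edge is counted once in each orientation, in both `H` and the bound), the minimum
of `⟪ψ, H ψ⟫` over unit vectors equals `−Σ J_{ij}`, it is attained by the
`N`-level singlet, and the singlet is the unique minimizer up to a phase. -/
theorem singlet_unique_ground_state
    {N : ℕ} (G : SimpleGraph (Fin N)) [DecidableRel G.Adj] (hG : G.Connected)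
    (J : Fin N → Fin N → ℝ) (hJpos : ∀ i j, G.Adj i j → 0 < J i j)
    (hJsymm : ∀ i j, J i j = J j i)
    (H : EuclideanSpace ℂ (Fin N → Fin N) →ₗ[ℂ] EuclideanSpace ℂ (Fin N → Fin N))
    (hH : H = ∑ p ∈ Finset.univ.filter (fun p : Fin N × Fin N => G.Adj p.1 p.2),
      (J p.1 p.2 : ℂ) • permOp (Equiv.swap p.1 p.2)) :
    (∀ ψ : EuclideanSpace ℂ (Fin N → Fin N), ‖ψ‖ = 1 →
      -(∑ p ∈ Finset.univ.filter (fun p : Fin N × Fin N => G.Adj p.1 p.2), J p.1 p.2)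
        ≤ (⟪ψ, H ψ⟫_ℂ).re) ∧
    (⟪singlet N, H (singlet N)⟫_ℂ).re =
      -(∑ p ∈ Finset.univ.filter (fun p : Fin N × Fin N => G.Adj p.1 p.2), J p.1 p.2) ∧
    (∀ ψ : EuclideanSpace ℂ (Fin N → Fin N), ‖ψ‖ = 1 →
      (⟪ψ, H ψ⟫_ℂ).re =
        -(∑ p ∈ Finset.univ.filter (fun p : Fin N × Fin N => G.Adj p.1 p.2), J p.1 p.2) →
      ∃ c : ℂ, ‖c‖ = 1 ∧ ψ = c • singlet N) :=
  singlet_unique_ground_state_general G hG J hJpos H hH
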